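/- arXiv:2201.12788 — 2 statements merged into one kernel-verified Lean document; each statement's English description precedes it below -/
import Mathlib

section
/- Equality case of Picone's inequality: if v, w are positive C^1 functions on a connected open set Ω ⊆ ℝ^N and |∇v|^{p-2} ⟨∇v, ∇(w^p/v^{p-1})⟩ = |∇w|^p holds identically on Ω, then there exists k > 0 such that v = k·w on Ω. -/
open scoped RealInnerProductSpace

/-!
Put `r = w / v`. The gradient of `w ^ p / v ^ (p - 1)` is
`r ^ (p - 1) • (p • ∇w - (p - 1) • r • ∇v)`, so after scaling the hypothesis reads
`‖a‖ ^ (p - 2) * ⟪a, p • b - (p - 1) • a⟫ = ‖b‖ ^ p` with `a = r • ∇v` and `b = ∇w`.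
By Cauchy–Schwarz and the Young (Bernoulli) inequality
`p * ‖a‖ ^ (p - 1) * ‖b‖ ≤ ‖b‖ ^ p + (p - 1) * ‖a‖ ^ p`, the left side never exceeds
`‖b‖ ^ p`, and equality forces `b = a`. Hence `∇w = r • ∇v`, i.e. `∇r = 0`, and `r` is
constant on the connected open set `Ω`.
-/

namespace Real

theorem eq_of_rpow_add_le_mul_rpow_sub_one {p s t : ℝ} (hp : 1 < p) (hs : 0 ≤ s) (ht : 0 < t)
    (h : s ^ p + (p - 1) * t ^ p ≤ p * t ^ (p - 1) * s) : s = t := by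
  by_contra hne
  have hx : s / t - 1 ≠ 0 := by
    rwa [sub_ne_zero, ne_eq, div_eq_one_iff_eq ht.ne']
  have hbern := one_add_mul_self_lt_rpow_one_add (by linarith [div_nonneg hs ht.le]) hx hp
  rw [add_sub_cancel, div_rpow hs ht.le, lt_div_iff₀ (rpow_pos_of_pos ht p)] at hbern
  have htp : t ^ p = t ^ (p - 1) * t := by rw [rpow_sub_one ht.ne', div_mul_cancel₀ _ ht.ne']
  have : (1 + p * (s / t - 1)) * t ^ p = t ^ p + p * (t ^ (p - 1) * s) - p * t ^ p := by
    rw [htp]; field_simp; ring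
  linarith

end Real

section InnerProduct

variable {F : Type*} [NormedAddCommGroup F] [InnerProductSpace ℝ F]

theorem norm_smul_rpow_mul_inner_smul_left {p c : ℝ} (hc : 0 < c) (a b : F) :
    ‖c • a‖ ^ (p - 2) * ⟪c • a, b⟫ = c ^ (p - 1) * (‖a‖ ^ (p - 2) * ⟪a, b⟫) := by
  rw [norm_smul, Real.norm_of_nonneg hc.le, Real.mul_rpow hc.le (norm_nonneg a),
    real_inner_smul_left, show p - 1 = p - 2 + 1 by ring, Real.rpow_add_one hc.ne']
  ring

theorem eq_of_norm_rpow_mul_inner_eq {p : ℝ} (hp : 1 < p) {a b : F}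
    (h : ‖a‖ ^ (p - 2) * ⟪a, p • b - (p - 1) • a⟫ = ‖b‖ ^ p) : b = a := by
  rcases eq_or_ne a 0 with rfl | ha
  · simp only [inner_zero_left, mul_zero] at h
    exact norm_eq_zero.mp ((Real.rpow_eq_zero (norm_nonneg b) (by linarith)).mp h.symm)
  have hna : 0 < ‖a‖ := norm_pos_iff.mpr ha
  have hpow2 : ‖a‖ ^ (p - 2) * ‖a‖ ^ 2 = ‖a‖ ^ p := by
    rw [← Real.rpow_natCast, ← Real.rpow_add hna]; norm_num
  have hpow1 : ‖a‖ ^ (p - 2) * ‖a‖ = ‖a‖ ^ (p - 1) := by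
    rw [← Real.rpow_add_one hna.ne']; ring_nf
  have hexpand : ‖b‖ ^ p + (p - 1) * ‖a‖ ^ p = p * (‖a‖ ^ (p - 2) * ⟪a, b⟫) := by
    rw [← h, inner_sub_right, real_inner_smul_right, real_inner_smul_right,
      real_inner_self_eq_norm_sq, ← hpow2]
    ring
  have hcs : ‖a‖ ^ (p - 2) * ⟪a, b⟫ ≤ ‖a‖ ^ (p - 1) * ‖b‖ := by
    rw [← hpow1, mul_assoc]
    exact mul_le_mul_of_nonneg_left (real_inner_le_norm a b) (by positivity)
  have hp0 : 0 < p := zero_lt_one.trans hp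
  have hnorm : ‖b‖ = ‖a‖ := Real.eq_of_rpow_add_le_mul_rpow_sub_one hp (norm_nonneg b) hna
    (by rw [hexpand, mul_assoc]; exact mul_le_mul_of_nonneg_left hcs hp0.le)
  have hinner : ⟪a, b⟫ = ‖a‖ * ‖b‖ := by
    rw [hnorm] at hexpand ⊢
    have : ‖a‖ ^ (p - 2) * ⟪a, b⟫ = ‖a‖ ^ (p - 2) * (‖a‖ * ‖a‖) := by
      rw [← sq, hpow2]
      exact mul_left_cancel₀ hp0.ne' (by linarith)
    exact mul_left_cancel₀ (by positivity) this
  have := inner_eq_norm_mul_iff_real.mp hinner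
  rw [hnorm] at this
  exact (smul_right_injective F hna.ne' this).symm

end InnerProduct

section Gradient

open InnerProductSpace

variable {F : Type*} [NormedAddCommGroup F] [InnerProductSpace ℝ F] [CompleteSpace F]
  {f g : F → ℝ} {f' g' x : F}

theorem HasGradientAt.mul (hf : HasGradientAt f f' x) (hg : HasGradientAt g g' x) :
    HasGradientAt (fun y => f y * g y) (f x • g' + g x • f') x := by
  rw [hasGradientAt_iff_hasFDerivAt, map_add, map_smulₛₗ, map_smulₛₗ]
  exact hf.hasFDerivAt.fun_mul hg.hasFDerivAt

theorem HasGradientAt.div (hf : HasGradientAt f f' x) (hg : HasGradientAt g g' x)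
    (hx : g x ≠ 0) :
    HasGradientAt (fun y => f y / g y) ((g x)⁻¹ • (f' - (f x / g x) • g')) x := by
  simp only [hasGradientAt_iff_hasFDerivAt, div_eq_mul_inv]
  refine (hf.hasFDerivAt.fun_mul
    ((hasDerivAt_inv hx).comp_hasFDerivAt x hg.hasFDerivAt)).congr_fderiv ?_
  ext y
  simp only [neg_smul, smul_neg, Function.comp_apply, add_apply, neg_apply, smul_apply,
    toDual_apply_apply, smul_eq_mul, map_smul, map_sub, sub_apply]
  field_simp
  ring

theorem HasGradientAt.rpow_const {p : ℝ} (hf : HasGradientAt f f' x) (hx : f x ≠ 0) :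
    HasGradientAt (fun y => f y ^ p) ((p * f x ^ (p - 1)) • f') x := by
  rw [hasGradientAt_iff_hasFDerivAt, map_smulₛₗ]
  exact hf.hasFDerivAt.rpow_const (Or.inl hx)

theorem HasGradientAt.rpow_div_rpow_sub_one {p : ℝ} (hg : HasGradientAt g g' x)
    (hf : HasGradientAt f f' x) (hgx : 0 < g x) (hfx : 0 < f x) :
    HasGradientAt (fun y => f y ^ p / g y ^ (p - 1))
      ((f x / g x) ^ (p - 1) • (p • f' - (p - 1) • (f x / g x) • g')) x := by
  have hpos : ∀ᶠ y in nhds x, 0 < g y ∧ 0 < f y :=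
    (hg.differentiableAt.continuousAt.eventually (lt_mem_nhds hgx)).and
      (hf.differentiableAt.continuousAt.eventually (lt_mem_nhds hfx))
  have hquot := (hf.div hg hgx.ne').rpow_const (p := p) (div_pos hfx hgx).ne'
  have hgrad : (f x / g x) ^ (p - 1) • (p • f' - (p - 1) • (f x / g x) • g') =
      g x • (p * (f x / g x) ^ (p - 1)) • (g x)⁻¹ • (f' - (f x / g x) • g') +
        (f x / g x) ^ p • g' := by
    rw [Real.rpow_sub_one (div_pos hfx hgx).ne']
    match_scalars <;> field_simp
    ring
  rw [hgrad]
  refine (hg.mul hquot).congr_of_eventuallyEq (hpos.mono fun y ⟨hgy, hfy⟩ => ?_)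
  dsimp only
  rw [Real.div_rpow hfy.le hgy.le, Real.rpow_sub_one hgy.ne']
  field_simp

end Gradient

theorem picone_equality_case_general {N : ℕ}
    (Ω : Set (EuclideanSpace ℝ (Fin N))) (hΩ : IsOpen Ω) (hΩc : IsConnected Ω)
    (p : ℝ) (hp : 1 < p)
    (v w : EuclideanSpace ℝ (Fin N) → ℝ)
    (hvpos : ∀ x ∈ Ω, 0 < v x) (hwpos : ∀ x ∈ Ω, 0 < w x)
    (gv gw gq : EuclideanSpace ℝ (Fin N) → EuclideanSpace ℝ (Fin N))
    (hgv : ∀ x ∈ Ω, HasGradientAt v (gv x) x)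
    (hgw : ∀ x ∈ Ω, HasGradientAt w (gw x) x)
    (hgq : ∀ x ∈ Ω, HasGradientAt (fun y => w y ^ p / v y ^ (p - 1)) (gq x) x)
    (heq : ∀ x ∈ Ω, ‖gv x‖ ^ (p - 2) * ⟪gv x, gq x⟫ = ‖gw x‖ ^ p) :
    ∃ k : ℝ, 0 < k ∧ ∀ x ∈ Ω, v x = k * w x := by
  have hratio : ∀ x ∈ Ω, HasGradientAt (fun y => w y / v y) 0 x := by
    intro x hx
    have hr : 0 < w x / v x := div_pos (hwpos x hx) (hvpos x hx)
    have hgq_eq := (hgq x hx).unique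
      ((hgv x hx).rpow_div_rpow_sub_one (hgw x hx) (hvpos x hx) (hwpos x hx))
    have hpicone := heq x hx
    rw [hgq_eq, real_inner_smul_right, mul_left_comm,
      ← norm_smul_rpow_mul_inner_smul_left hr] at hpicone
    have hgw_eq : gw x = (w x / v x) • gv x := eq_of_norm_rpow_mul_inner_eq hp hpicone
    simpa only [hgw_eq, sub_self, smul_zero] using (hgw x hx).div (hgv x hx) (hvpos x hx).ne'
  obtain ⟨c, hc⟩ := hΩ.exists_is_const_of_fderiv_eq_zero hΩc.isPreconnected
    (fun x hx => (hratio x hx).differentiableAt.differentiableWithinAt)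
    (fun x hx => by simpa using (hratio x hx).hasFDerivAt.fderiv)
  obtain ⟨x₀, hx₀⟩ := hΩc.nonempty
  have hcpos : 0 < c := hc x₀ hx₀ ▸ div_pos (hwpos x₀ hx₀) (hvpos x₀ hx₀)
  refine ⟨c⁻¹, inv_pos.mpr hcpos, fun x hx => ?_⟩
  rw [← hc x hx, inv_div, div_mul_cancel₀ _ (hwpos x hx).ne']

/-- Equality case of Picone's inequality: if `v, w` are positive C¹ functions on a
connected open set `Ω ⊆ ℝ^N` and `|∇v|^(p-2) ⟨∇v, ∇(w^p/v^(p-1))⟩ = |∇w|^p` holds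
identically on `Ω`, then there is `k > 0` with `v = k · w` on `Ω`. -/
theorem picone_equality_case {N : ℕ}
    (Ω : Set (EuclideanSpace ℝ (Fin N))) (hΩ : IsOpen Ω) (hΩc : IsConnected Ω)
    (p : ℝ) (hp : 1 < p)
    (v w : EuclideanSpace ℝ (Fin N) → ℝ)
    (hv : ContDiffOn ℝ 1 v Ω) (hw : ContDiffOn ℝ 1 w Ω)
    (hvpos : ∀ x ∈ Ω, 0 < v x) (hwpos : ∀ x ∈ Ω, 0 < w x)
    (gv gw gq : EuclideanSpace ℝ (Fin N) → EuclideanSpace ℝ (Fin N))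
    (hgv : ∀ x ∈ Ω, HasGradientAt v (gv x) x)
    (hgw : ∀ x ∈ Ω, HasGradientAt w (gw x) x)
    (hgq : ∀ x ∈ Ω, HasGradientAt (fun y => w y ^ p / v y ^ (p - 1)) (gq x) x)
    (heq : ∀ x ∈ Ω, ‖gv x‖ ^ (p - 2) * ⟪gv x, gq x⟫ = ‖gw x‖ ^ p) :
    ∃ k : ℝ, 0 < k ∧ ∀ x ∈ Ω, v x = k * w x :=
  picone_equality_case_general Ω hΩ hΩc p hp v w hvpos hwpos gv gw gq hgv hgw hgq heq
end

section
/- Folding lemma: let K ⊆ ℝ^N be a compact convex set and ω ∈ S^{N-1} such that the section π_{λ,ω} ∩ K equals the orthogonal projection of K onto the hyperplane π_{λ,ω} = {x : ⟨x,ω⟩ = λ}. Then max{F_K(ω), F_K(−ω)} ≥ (1/4)·B_K(ω), where F_K(ν) is the maximal folding height of K in direction ν and B_K(ω) is the breadth. -/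
open scoped RealInnerProductSpace

/-- The support function `H_K(ω) = sup {⟨x, ω⟩ : x ∈ K}`. -/
noncomputable def suppFn {N : ℕ} (K : Set (EuclideanSpace ℝ (Fin N)))
    (ω : EuclideanSpace ℝ (Fin N)) : ℝ :=
  sSup ((fun x => ⟪x, ω⟫) '' K)

/-- The breadth `B_K(ω) = H_K(ω) + H_K(-ω)`. -/
noncomputable def breadthFn {N : ℕ} (K : Set (EuclideanSpace ℝ (Fin N)))
    (ω : EuclideanSpace ℝ (Fin N)) : ℝ :=
  suppFn K ω + suppFn K (-ω)

/-- The cap `K_{μ,ω} = {x ∈ K : ⟨x,ω⟩ ≥ μ}`. -/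
noncomputable def capSet {N : ℕ} (K : Set (EuclideanSpace ℝ (Fin N)))
    (ω : EuclideanSpace ℝ (Fin N)) (μ : ℝ) : Set (EuclideanSpace ℝ (Fin N)) :=
  {x ∈ K | μ ≤ ⟪x, ω⟫}

/-- The reflection `T_{μ,ω}(x) = x - 2ω(⟨ω,x⟩ - μ)`. -/
noncomputable def reflMap {N : ℕ} (ω : EuclideanSpace ℝ (Fin N)) (μ : ℝ)
    (x : EuclideanSpace ℝ (Fin N)) : EuclideanSpace ℝ (Fin N) :=
  x - (2 * (⟪ω, x⟫ - μ)) • ω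

/-- The maximal folding cap `K_ω = ∪ {K_{μ,ω} : T_{μ,ω}(K_{μ,ω}) ⊆ K}`. -/
noncomputable def maxFoldCap {N : ℕ} (K : Set (EuclideanSpace ℝ (Fin N)))
    (ω : EuclideanSpace ℝ (Fin N)) : Set (EuclideanSpace ℝ (Fin N)) :=
  ⋃ μ ∈ {μ : ℝ | reflMap ω μ '' capSet K ω μ ⊆ K}, capSet K ω μ

/-- The maximal folding height `F_K(ω) = B_{K_ω}(ω)`. -/
noncomputable def foldHeight {N : ℕ} (K : Set (EuclideanSpace ℝ (Fin N)))
    (ω : EuclideanSpace ℝ (Fin N)) : ℝ :=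
  breadthFn (maxFoldCap K ω) ω

/-- The orthogonal projection onto the hyperplane `⟨x,ω⟩ = λ` (for `‖ω‖ = 1`). -/
noncomputable def projMap {N : ℕ} (ω : EuclideanSpace ℝ (Fin N)) (lam : ℝ)
    (x : EuclideanSpace ℝ (Fin N)) : EuclideanSpace ℝ (Fin N) :=
  x - (⟪x, ω⟫ - lam) • ω

/-!
Fold at the level `μ` halfway between the section `⟨x, ω⟩ = λ` and the top `H_K(ω)` of `K`.
A point `x` of the cap at height `t ∈ [μ, H_K(ω)]` is reflected to height `2μ - t ≥ λ`, i.e. onto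
the segment from `x` to its shadow on the section, which lies in `K` by hypothesis; so `K` folds
at `μ` and `F_K(ω) ≥ H_K(ω) - μ = (H_K(ω) - λ) / 2`. The same argument for `-ω` gives
`F_K(-ω) ≥ (H_K(-ω) + λ) / 2`, and the two bounds add up to `B_K(ω) / 2`.
-/

theorem sub_smul_mem_segment {E : Type*} [AddCommGroup E] [Module ℝ E] (x v : E) {a b : ℝ}
    (ha : 0 ≤ a) (hab : a ≤ b) : x - a • v ∈ segment ℝ x (x - b • v) := by
  rw [mem_segment_iff_sameRay]
  have hsplit : x - b • v - (x - a • v) = (b - a) • -v := by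
    rw [smul_neg, sub_smul]; abel
  rw [sub_sub_cancel_left, ← smul_neg, hsplit]
  exact (SameRay.sameRay_nonneg_smul_left (-v) ha).nonneg_smul_right (sub_nonneg.2 hab)

section Folding

variable {N : ℕ} {K : Set (EuclideanSpace ℝ (Fin N))} {ω : EuclideanSpace ℝ (Fin N)}

theorem le_suppFn {S : Set (EuclideanSpace ℝ (Fin N))} (hS : Bornology.IsBounded S)
    {x : EuclideanSpace ℝ (Fin N)} (hx : x ∈ S) : ⟪x, ω⟫ ≤ suppFn S ω :=
  le_csSup ((hS.isCompact_closure.image (continuous_id.inner continuous_const)).bddAbove.mono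
    (Set.image_mono subset_closure)) ⟨x, hx, rfl⟩

theorem IsCompact.exists_inner_eq_suppFn (hK : IsCompact K) (hne : K.Nonempty) :
    ∃ x ∈ K, ⟪x, ω⟫ = suppFn K ω :=
  (hK.image (continuous_id.inner continuous_const)).sSup_mem (hne.image _)

theorem sub_le_breadthFn {S : Set (EuclideanSpace ℝ (Fin N))} (hS : Bornology.IsBounded S)
    {x y : EuclideanSpace ℝ (Fin N)} (hx : x ∈ S) (hy : y ∈ S) :
    ⟪x, ω⟫ - ⟪y, ω⟫ ≤ breadthFn S ω := by
  have hx' : ⟪x, ω⟫ ≤ suppFn S ω := le_suppFn hS hx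
  have hy' : ⟪y, -ω⟫ ≤ suppFn S (-ω) := le_suppFn hS hy
  rw [inner_neg_right] at hy'
  unfold breadthFn
  linarith

theorem maxFoldCap_subset : maxFoldCap K ω ⊆ K :=
  Set.iUnion₂_subset fun _ _ _ hx => hx.1

theorem capSet_subset_maxFoldCap {μ : ℝ} (hμ : reflMap ω μ '' capSet K ω μ ⊆ K) :
    capSet K ω μ ⊆ maxFoldCap K ω :=
  Set.subset_biUnion_of_mem (u := capSet K ω) hμ

theorem reflMap_mem_segment_projMap {μ lam : ℝ} {x : EuclideanSpace ℝ (Fin N)}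
    (hμx : μ ≤ ⟪x, ω⟫) (hx : ⟪x, ω⟫ ≤ 2 * μ - lam) :
    reflMap ω μ x ∈ segment ℝ x (projMap ω lam x) := by
  rw [reflMap, projMap, real_inner_comm x ω]
  exact sub_smul_mem_segment x ω (by linarith) (by linarith)

theorem reflMap_image_capSet_subset (hconv : Convex ℝ K) {lam μ : ℝ}
    (hproj : projMap ω lam '' K ⊆ K) (htop : ∀ x ∈ K, ⟪x, ω⟫ ≤ 2 * μ - lam) :
    reflMap ω μ '' capSet K ω μ ⊆ K := by
  rintro _ ⟨x, ⟨hxK, hμx⟩, rfl⟩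
  exact hconv.segment_subset hxK (hproj ⟨x, hxK, rfl⟩)
    (reflMap_mem_segment_projMap hμx (htop x hxK))

theorem half_sub_le_foldHeight (hK : IsCompact K) (hconv : Convex ℝ K) {lam : ℝ}
    (hproj : projMap ω lam '' K ⊆ K) {y : EuclideanSpace ℝ (Fin N)} (hyK : y ∈ K)
    (hy : ⟪y, ω⟫ = lam) :
    (suppFn K ω - lam) / 2 ≤ foldHeight K ω := by
  set μ := (lam + suppFn K ω) / 2 with hμ
  have hle_top : ∀ x ∈ K, ⟪x, ω⟫ ≤ suppFn K ω := fun x hx => le_suppFn hK.isBounded hx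
  obtain ⟨xtop, hxtopK, hxtop⟩ := hK.exists_inner_eq_suppFn (ω := ω) ⟨y, hyK⟩
  have hlam_top : lam ≤ suppFn K ω := hy ▸ hle_top y hyK
  obtain ⟨z, hzK, hz⟩ : μ ∈ (fun x => ⟪x, ω⟫) '' K :=
    hconv.isPreconnected.intermediate_value hyK hxtopK (by fun_prop)
      ⟨by linarith, by linarith⟩
  have hcap : capSet K ω μ ⊆ maxFoldCap K ω :=
    capSet_subset_maxFoldCap <| reflMap_image_capSet_subset hconv hproj fun x hx => by
      linarith [hle_top x hx]
  have hbreadth : ⟪xtop, ω⟫ - ⟪z, ω⟫ ≤ foldHeight K ω :=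
    sub_le_breadthFn (hK.isBounded.subset maxFoldCap_subset)
      (hcap ⟨hxtopK, by linarith⟩) (hcap ⟨hzK, hz.ge⟩)
  linarith

end Folding

theorem projMap_neg {N : ℕ} (ω : EuclideanSpace ℝ (Fin N)) (lam : ℝ) :
    projMap (-ω) (-lam) = projMap ω lam := by
  funext x
  simp only [projMap, inner_neg_right, smul_neg, ← neg_smul, neg_sub_neg, neg_sub]

theorem folding_lemma_general {N : ℕ}
    (K : Set (EuclideanSpace ℝ (Fin N))) (hK : IsCompact K) (hconv : Convex ℝ K)
    (ω : EuclideanSpace ℝ (Fin N)) (lam : ℝ)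
    (hshadow : {x : EuclideanSpace ℝ (Fin N) | ⟪x, ω⟫ = lam} ∩ K = projMap ω lam '' K) :
    max (foldHeight K ω) (foldHeight K (-ω)) ≥ (1 / 4) * breadthFn K ω := by
  rcases K.eq_empty_or_nonempty with rfl | ⟨x, hx⟩
  · simp [foldHeight, breadthFn, suppFn, maxFoldCap, capSet]
  have hproj : projMap ω lam '' K ⊆ K := hshadow ▸ Set.inter_subset_right
  obtain ⟨hy, hyK⟩ : projMap ω lam x ∈ {x | ⟪x, ω⟫ = lam} ∩ K := hshadow ▸ ⟨x, hx, rfl⟩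
  have hpos := half_sub_le_foldHeight hK hconv hproj hyK hy
  have hneg := half_sub_le_foldHeight (ω := -ω) hK hconv ((projMap_neg ω lam).symm ▸ hproj) hyK
    (by rw [inner_neg_right, hy.out])
  rw [ge_iff_le, breadthFn]
  linarith [le_max_left (foldHeight K ω) (foldHeight K (-ω)),
    le_max_right (foldHeight K ω) (foldHeight K (-ω))]

/-- Folding lemma: if the section `π_{λ,ω} ∩ K` equals the orthogonal projection
(shadow) of `K` onto the hyperplane `π_{λ,ω}`, then
`max {F_K(ω), F_K(-ω)} ≥ (1/4) B_K(ω)`. -/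
theorem folding_lemma {N : ℕ}
    (K : Set (EuclideanSpace ℝ (Fin N))) (hK : IsCompact K) (hconv : Convex ℝ K)
    (ω : EuclideanSpace ℝ (Fin N)) (hω : ‖ω‖ = 1) (lam : ℝ)
    (hshadow : {x : EuclideanSpace ℝ (Fin N) | ⟪x, ω⟫ = lam} ∩ K = projMap ω lam '' K) :
    max (foldHeight K ω) (foldHeight K (-ω)) ≥ (1 / 4) * breadthFn K ω :=
  folding_lemma_general K hK hconv ω lam hshadow
end
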